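/- Let h > 0 and γ ∈ (0,1). Define q(z) := z⁴ + (h+1)(γ−4)z³ − (3(h²+1)(γ−2) − h(γ²−26γ+4))z² + (1+h)((h²+1)(3γ−4) + h(−20γ²+10γ+8))z − (γ−1)((h−1)² + 4γh)². Then q(0) > 0, q((1+√h)²) < 0, and q(z) → +∞ as z → +∞; consequently q has at least two distinct positive real roots. -/

import Mathlib

open Filter

noncomputable def q (h γ : ℝ) (z : ℝ) : ℝ :=
  z^4 + (h + 1) * (γ - 4) * z^3
    - (3 * (h^2 + 1) * (γ - 2) - h * (γ^2 - 26 * γ + 4)) * z^2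
    + (1 + h) * ((h^2 + 1) * (3 * γ - 4) + h * (-20 * γ^2 + 10 * γ + 8)) * z
    - (γ - 1) * ((h - 1)^2 + 4 * γ * h)^2

/-!
`q 0 = (1 - γ) ((h - 1)² + 4γh)² > 0`, while substituting `h = s²` shows that `q ((1 + s)²)` is
`-s²γ` times a polynomial in `s, γ` with positive coefficients. Since `q` is a monic quartic, it
tends to `+∞`, and the intermediate value theorem gives one root in `(0, (1 + s)²)` and another
beyond `(1 + s)²`.
-/

open Polynomial in
theorem tendsto_quartic_atTop (a b c d : ℝ) :
    Tendsto (fun z : ℝ => z ^ 4 + a * z ^ 3 + b * z ^ 2 + c * z + d) atTop atTop := by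
  have hdeg : (X ^ 4 + C a * X ^ 3 + C b * X ^ 2 + C c * X + C d : ℝ[X]).degree = 4 := by
    compute_degree!
  have hmonic : (X ^ 4 + C a * X ^ 3 + C b * X ^ 2 + C c * X + C d : ℝ[X]).Monic := by
    monicity!
  convert tendsto_atTop_of_leadingCoeff_nonneg _ (by rw [hdeg]; norm_num)
    (by rw [hmonic.leadingCoeff]; exact zero_le_one) using 2 with z
  simp

theorem exists_zero_mem_Ioo_and_zero_mem_Ioi {f : ℝ → ℝ} (hf : Continuous f) {a b : ℝ}
    (hab : a ≤ b) (ha : 0 < f a) (hb : f b < 0) (htop : Tendsto f atTop atTop) :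
    ∃ z₁ ∈ Set.Ioo a b, ∃ z₂ ∈ Set.Ioi b, f z₁ = 0 ∧ f z₂ = 0 := by
  obtain ⟨z₁, hz₁, hfz₁⟩ := intermediate_value_Ioo' hab hf.continuousOn ⟨hb, ha⟩
  obtain ⟨M, hfM, hbM⟩ :=
    ((htop.eventually (eventually_gt_atTop 0)).and (eventually_gt_atTop b)).exists
  obtain ⟨z₂, hz₂, hfz₂⟩ := intermediate_value_Ioo hbM.le hf.continuousOn ⟨hb, hfM⟩
  exact ⟨z₁, hz₁, z₂, hz₂.1, hfz₁, hfz₂⟩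

theorem continuous_q (h γ : ℝ) : Continuous (q h γ) := by
  unfold q
  fun_prop

theorem tendsto_q_atTop (h γ : ℝ) : Tendsto (q h γ) atTop atTop := by
  convert tendsto_quartic_atTop ((h + 1) * (γ - 4))
    (-(3 * (h^2 + 1) * (γ - 2) - h * (γ^2 - 26 * γ + 4)))
    ((1 + h) * ((h^2 + 1) * (3 * γ - 4) + h * (-20 * γ^2 + 10 * γ + 8)))
    (-((γ - 1) * ((h - 1)^2 + 4 * γ * h)^2)) using 2 with z
  unfold q
  ring

theorem q_zero_pos {h γ : ℝ} (hh : 0 < h) (hγ : γ ∈ Set.Ioo (0:ℝ) 1) : 0 < q h γ 0 := by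
  have hpos : 0 < (h - 1)^2 + 4 * γ * h := by nlinarith [sq_nonneg (h - 1), hγ.1]
  have hq : q h γ 0 = (1 - γ) * ((h - 1)^2 + 4 * γ * h)^2 := by unfold q; ring
  rw [hq]
  exact mul_pos (sub_pos.mpr hγ.2) (pow_pos hpos 2)

theorem q_sq_one_add_sq (s γ : ℝ) :
    q (s^2) γ ((1 + s)^2) =
      -(s^2 * γ * (27*γ + 64*s + 36*s*γ + 128*s^2 + 2*s^2*γ + 16*s^2*γ^2
        + 64*s^3 + 36*s^3*γ + 27*s^4*γ)) := by
  unfold q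
  ring

theorem q_one_add_sqrt_sq_neg {h γ : ℝ} (hh : 0 < h) (hγ : 0 < γ) :
    q h γ ((1 + Real.sqrt h)^2) < 0 := by
  have hs : 0 < Real.sqrt h := Real.sqrt_pos.mpr hh
  rw [← Real.sq_sqrt hh.le, Real.sqrt_sq hs.le, q_sq_one_add_sq, neg_neg_iff_pos]
  positivity

theorem q_sign_changes (h γ : ℝ) (hh : 0 < h) (hγ : γ ∈ Set.Ioo (0:ℝ) 1) :
    0 < q h γ 0 ∧ q h γ ((1 + Real.sqrt h)^2) < 0 ∧
    Tendsto (q h γ) atTop atTop ∧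
    ∃ z₁ z₂ : ℝ, 0 < z₁ ∧ 0 < z₂ ∧ z₁ ≠ z₂ ∧ q h γ z₁ = 0 ∧ q h γ z₂ = 0 := by
  have h0 := q_zero_pos hh hγ
  have hneg := q_one_add_sqrt_sq_neg hh hγ.1
  have htop := tendsto_q_atTop h γ
  obtain ⟨z₁, hz₁, z₂, hz₂, hqz₁, hqz₂⟩ :=
    exists_zero_mem_Ioo_and_zero_mem_Ioi (continuous_q h γ) (by positivity) h0 hneg htop
  refine ⟨h0, hneg, htop, z₁, z₂, hz₁.1, hz₁.1.trans (hz₁.2.trans hz₂), ?_, hqz₁, hqz₂⟩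
  exact (hz₁.2.trans hz₂).ne
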